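/- If Π is a process of the simulating normal theory ⟨D_u^F, W_u⟩, then O(Π) — the sequence of original defaults d_i corresponding, in order, to the defaults a_i occurring in Π — is a process of the original theory ⟨D,W⟩. -/

import Mathlib

set_option linter.unusedVariables false


namespace DLogic

/-- Propositional formulas over countably many variables. -/
inductive PForm : Type
  | var : ℕ → PForm
  | fls : PForm
  | imp : PForm → PForm → PForm
  deriving DecidableEq

namespace PForm

/-- Negation. -/
def neg (φ : PForm) : PForm := imp φ fls

/-- Truth. -/
def tru : PForm := imp fls fls

/-- Conjunction. -/
def andF (φ ψ : PForm) : PForm := neg (imp φ (neg ψ))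

/-- Disjunction. -/
def orF (φ ψ : PForm) : PForm := imp (neg φ) ψ

/-- Evaluation of a formula under a valuation. -/
def eval (v : ℕ → Bool) : PForm → Bool
  | var n => v n
  | fls => false
  | imp a b => !(eval v a) || eval v b

/-- Substitution of formulas for variables. -/
def subst (f : ℕ → PForm) : PForm → PForm
  | var n => f n
  | fls => fls
  | imp a b => imp (subst f a) (subst f b)

/-- Renaming of variables. -/
def rename (σ : ℕ → ℕ) (φ : PForm) : PForm := subst (fun n => var (σ n)) φ

/-- The variables occurring in a formula. -/
def vars : PForm → Finset ℕ
  | var n => {n}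
  | fls => ∅
  | imp a b => vars a ∪ vars b

/-- The size of a formula. -/
def size : PForm → ℕ
  | var _ => 1
  | fls => 1
  | imp a b => size a + size b + 1

end PForm

/-- A propositional theory is a set of formulas. -/
abbrev Th : Type := Set PForm

/-- A valuation is a model of a theory. -/
def Models (v : ℕ → Bool) (Γ : Th) : Prop := ∀ φ ∈ Γ, φ.eval v = true

/-- A theory is consistent if it has a model. -/
def ThConsistent (Γ : Th) : Prop := ∃ v, Models v Γ

/-- Semantic entailment. -/
def ThEntails (Γ : Th) (φ : PForm) : Prop := ∀ v, Models v Γ → φ.eval v = true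

/-- Deductive closure. -/
def Cn (Γ : Th) : Th := {φ | ThEntails Γ φ}

/-- A default rule: precondition, justification, consequence. -/
structure Default : Type where
  prec : PForm
  just : PForm
  cons : PForm
  deriving DecidableEq

/-- A normal default has its justification equal to its consequence. -/
def Default.IsNormal (d : Default) : Prop := d.just = d.cons

/-- The set of formulas of a background theory given as a list. -/
def WSet (W : List PForm) : Th := {φ | φ ∈ W}

/-- The theory consisting of `W` together with the consequences of the defaults in `Pr`. -/
def procTh (W : List PForm) (Pr : List Default) : Th :=
  {φ | φ ∈ W ∨ ∃ d ∈ Pr, d.cons = φ}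

/-- `Pr` is a process of the default theory `⟨D, W⟩`: a sequence of distinct defaults of `D`
whose consequences are jointly consistent with `W`, each of whose preconditions is entailed by
`W` plus the consequences of the preceding defaults. -/
def IsProcess (D : List Default) (W : List PForm) (Pr : List Default) : Prop :=
  Pr.Nodup ∧ (∀ d ∈ Pr, d ∈ D) ∧ ThConsistent (procTh W Pr) ∧
    ∀ i : Fin Pr.length, ThEntails (procTh W (Pr.take i.1)) (Pr.get i).prec

/-- Local (Reiter-style) successfulness: the justification of every applied default is
consistent with `W` plus the consequences of all applied defaults. -/
def LocallySuccessful (W : List PForm) (Pr : List Default) : Prop :=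
  ∀ d ∈ Pr, ThConsistent (procTh W Pr ∪ {d.just})

/-- Reiter closure: no unapplied default has its precondition entailed and its justification
consistent with `W` plus the consequences. -/
def ReiterClosed (D : List Default) (W : List PForm) (Pr : List Default) : Prop :=
  ∀ d ∈ D, d ∉ Pr →
    ¬ ThEntails (procTh W Pr) d.prec ∨ ¬ ThConsistent (procTh W Pr ∪ {d.just})

/-- Reiter extensions: deductive closures of `W` plus the consequences of a successful and
closed process. -/
def ReiterExtension (D : List Default) (W : List PForm) (E : Th) : Prop :=
  ∃ Pr, IsProcess D W Pr ∧ LocallySuccessful W Pr ∧ ReiterClosed D W Pr ∧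
    E = Cn (procTh W Pr)

/-- Skeptical entailment in Reiter's default logic. -/
def ReiterSkeptical (D : List Default) (W : List PForm) (φ : PForm) : Prop :=
  ∀ E, ReiterExtension D W E → φ ∈ E

/-- Two theories are var-equivalent w.r.t. a set of variables `X` when they entail exactly the
same formulas built only from variables in `X`. -/
def VarEquiv (X : Finset ℕ) (Γ Δ : Th) : Prop :=
  ∀ φ : PForm, φ.vars ⊆ X → (ThEntails Γ φ ↔ ThEntails Δ φ)

/-- A dummy default. -/
def dflt : Default := ⟨PForm.fls, PForm.fls, PForm.fls⟩

/-- Conjunction of a list of formulas. -/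
def listConj : List PForm → PForm
  | [] => PForm.tru
  | φ :: l => φ.andF (listConj l)

/-- The size of a default. -/
def Default.size (d : Default) : ℕ := d.prec.size + d.just.size + d.cons.size

/-- The size of a default theory. -/
def theorySize (D : List Default) (W : List PForm) : ℕ :=
  (D.map Default.size).sum + (W.map PForm.size).sum + D.length + W.length + 1

/-- The variables of a default theory. -/
def theoryVars (D : List Default) (W : List PForm) : Finset ℕ :=
  (D.map (fun d => d.prec.vars ∪ d.just.vars ∪ d.cons.vars)).foldr (· ∪ ·) ∅ ∪
    (W.map PForm.vars).foldr (· ∪ ·) ∅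

/-- A strict upper bound on the variables of a default theory. -/
def varBound (D : List Default) (W : List PForm) : ℕ := (theoryVars D W).sup id + 1

end DLogic
namespace DLogic

/-- An abstract regular default-logic semantics: successfulness and closure predicates on
sequences of defaults, with successfulness antimonotonic and the empty process successful
whenever the background theory is consistent. -/
structure RegSem : Type 1 where
  Succ : List Default → List PForm → List Default → Prop
  Closed : List Default → List PForm → List Default → Prop
  anti : ∀ D W Pr Pr', Succ D W (Pr ++ Pr') → Succ D W Pr
  empty_succ : ∀ D W, ThConsistent (WSet W) → Succ D W []

/-- A semantics is fail-safe if every successful process is a prefix of a successful and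
closed process. -/
def RegSem.FailSafe (S : RegSem) : Prop :=
  ∀ D W Pr, IsProcess D W Pr → S.Succ D W Pr →
    ∃ Pr', IsProcess D W (Pr ++ Pr') ∧ S.Succ D W (Pr ++ Pr') ∧ S.Closed D W (Pr ++ Pr')

/-- Extensions under an abstract regular semantics. -/
def RegSem.Extension (S : RegSem) (D : List Default) (W : List PForm) (E : Th) : Prop :=
  ∃ Pr, IsProcess D W Pr ∧ S.Succ D W Pr ∧ S.Closed D W Pr ∧ E = Cn (procTh W Pr)

/-- Skeptical entailment under an abstract regular semantics. -/
def RegSem.Skeptical (S : RegSem) (D : List Default) (W : List PForm) (φ : PForm) : Prop :=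
  ∀ E, S.Extension D W E → φ ∈ E

end DLogic
namespace DLogic

/-! ### The simulating normal default theory `⟨D_u^F, W_u⟩`

The original theory `⟨D, W⟩` has `m = D.length` defaults and variables below `N`.
Its regular semantics is represented by `u` consistency tests `δ j` and a circuit `C`.
In a test formula `δ j`, the variable `2*k` stands for the original variable `k` and the
variable `2*i+1` stands for the membership atom `(d_i ∈ Π)`.  In the circuit `C`, the
variable `2*j` stands for the test result `o_j` and `2*i+1` stands for `c_i`.

Fresh variables: `X₀`-copy of `k` is `N + k`; the `X_j`-copy (for test `j`) of `k` is
`N + N*(j+1) + k`; and `c i`, `e i`, `o j`, `t j` live above `N*(u+2)`. -/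

namespace Sim

/-- Renaming of the original alphabet `X` to its copy `X₀`. -/
def ρ0 (N : ℕ) : ℕ → ℕ := fun k => N + k

/-- The `X_j` copy of original variable `k`. -/
def copyV (N j k : ℕ) : ℕ := N + N * (j + 1) + k

/-- The variable `c i`. -/
def cV (N u m i : ℕ) : ℕ := N * (u + 2) + i

/-- The variable `e i`. -/
def eV (N u m i : ℕ) : ℕ := N * (u + 2) + m + i

/-- The variable `o j`. -/
def oV (N u m j : ℕ) : ℕ := N * (u + 2) + 2 * m + j

/-- The variable `t j`. -/
def tV (N u m j : ℕ) : ℕ := N * (u + 2) + 2 * m + u + j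

/-- The `i`-th default of the original theory. -/
def origD (D : List Default) (i : ℕ) : Default := D.getD i dflt

/-- Justification/consequence of the default `a i`. -/
def aFml (D : List Default) (N u i : ℕ) : PForm :=
  ((origD D i).cons.rename (ρ0 N)).andF
    ((PForm.var (cV N u D.length i)).andF (PForm.var (eV N u D.length i)))

/-- The default `a i`, simulating the application of `d i`. -/
def aDef (D : List Default) (N u i : ℕ) : Default :=
  ⟨(origD D i).prec.rename (ρ0 N), aFml D N u i, aFml D N u i⟩

/-- Justification/consequence of the default `n i`. -/
def nFml (D : List Default) (N u i : ℕ) : PForm :=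
  ((PForm.var (cV N u D.length i)).neg).andF (PForm.var (eV N u D.length i))

/-- The default `n i`, simulating the non-application of `d i`. -/
def nDef (D : List Default) (N u i : ℕ) : Default :=
  ⟨PForm.tru, nFml D N u i, nFml D N u i⟩

/-- The formula `E = e₁ ∧ ⋯ ∧ e_m`. -/
def Econj (N u m : ℕ) : PForm :=
  listConj ((List.range m).map fun i => PForm.var (eV N u m i))

/-- The formula `T = t₁ ∧ ⋯ ∧ t_u`. -/
def Tconj (N u m : ℕ) : PForm :=
  listConj ((List.range u).map fun j => PForm.var (tV N u m j))

/-- The test formula `δ j` instantiated in the simulating theory: original variables are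
replaced by their `X_j`-copies and membership atoms by the variables `c i`. -/
def instδ (N u m : ℕ) (δ : ℕ → PForm) (j : ℕ) : PForm :=
  (δ j).subst fun k =>
    if k % 2 = 0 then PForm.var (copyV N j (k / 2)) else PForm.var (cV N u m (k / 2))

/-- Justification/consequence of the default `v j`. -/
def vFml (N u m : ℕ) (δ : ℕ → PForm) (j : ℕ) : PForm :=
  (instδ N u m δ j).andF ((PForm.var (oV N u m j)).andF (PForm.var (tV N u m j)))

/-- The default `v j`, recording a positive outcome of the `j`-th consistency test. -/
def vDef (N u m : ℕ) (δ : ℕ → PForm) (j : ℕ) : Default :=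
  ⟨Econj N u m, vFml N u m δ j, vFml N u m δ j⟩

/-- Justification/consequence of the default `g j`. -/
def gFml (N u m j : ℕ) : PForm :=
  ((PForm.var (oV N u m j)).neg).andF (PForm.var (tV N u m j))

/-- The default `g j`, recording a negative outcome of the `j`-th consistency test. -/
def gDef (N u m : ℕ) (δ : ℕ → PForm) (j : ℕ) : Default :=
  ⟨(Econj N u m).andF (instδ N u m δ j).neg, gFml N u m j, gFml N u m j⟩

/-- The circuit `C` instantiated on the variables `o j` and `c i`. -/
def instC (N u m : ℕ) (C : PForm) : PForm :=
  C.subst fun k =>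
    if k % 2 = 0 then PForm.var (oV N u m (k / 2)) else PForm.var (cV N u m (k / 2))

/-- Consequence of `z₁`: `W ∧ ⋀ (c i → γ i)` over the original alphabet. -/
def z1Fml (D : List Default) (W : List PForm) (N u : ℕ) : PForm :=
  (listConj W).andF
    (listConj ((List.range D.length).map fun i =>
      (PForm.var (cV N u D.length i)).imp (origD D i).cons))

/-- The default `z₁`, outputting the simulated extension. -/
def z1Def (D : List Default) (W : List PForm) (N u : ℕ) (C : PForm) : Default :=
  ⟨((Econj N u D.length).andF (Tconj N u D.length)).andF (instC N u D.length C),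
    z1Fml D W N u, z1Fml D W N u⟩

/-- The default `z₂`, outputting `F` when the simulated process is not successful and
closed. -/
def z2Def (D : List Default) (N u : ℕ) (C : PForm) (F : PForm) : Default :=
  ⟨((Econj N u D.length).andF (Tconj N u D.length)).andF (instC N u D.length C).neg, F, F⟩

/-- The defaults `D_u^F = A ∪ N ∪ V ∪ G ∪ Z` of the simulating theory. -/
def simD (D : List Default) (W : List PForm) (N u : ℕ) (δ : ℕ → PForm) (C F : PForm) :
    List Default :=
  (List.range D.length).map (aDef D N u) ++ (List.range D.length).map (nDef D N u) ++
    (List.range u).map (vDef N u D.length δ) ++ (List.range u).map (gDef N u D.length δ) ++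
    [z1Def D W N u C, z2Def D N u C F]

/-- The background theory `W_u = W[X/X₀]`. -/
def simW (W : List PForm) (N : ℕ) : List PForm := W.map (PForm.rename (ρ0 N))

/-- `O(Π)`: the sequence of original defaults corresponding to the `A`-defaults of `Π`. -/
def Omap (D : List Default) (N u : ℕ) (Pr : List Default) : List Default :=
  Pr.filterMap fun d =>
    ((List.range D.length).find? fun i => decide (d = aDef D N u i)).map (origD D)

/-- The membership vector of a simulated process. -/
def memOf (D : List Default) (Pr : List Default) (i : ℕ) : Bool :=
  decide (i < D.length ∧ origD D i ∈ Pr)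

/-- The test formula `δ j` instantiated at a membership vector, over the original alphabet. -/
def testAt (δ : ℕ → PForm) (mem : ℕ → Bool) (j : ℕ) : PForm :=
  (δ j).subst fun k =>
    if k % 2 = 0 then PForm.var (k / 2) else cond (mem (k / 2)) PForm.tru PForm.fls

/-- The circuit `C` holds on given test results `o` and membership bits `c`. -/
def circHolds (C : PForm) (o c : ℕ → Bool) : Prop :=
  C.eval (fun k => if k % 2 = 0 then o (k / 2) else c (k / 2)) = true

open Classical in
/-- Boolean truth value of a proposition. -/
noncomputable def bOf (P : Prop) : Bool := if P then true else false

/-- The tests `δ` and the circuit `C` represent the regular semantics `S` on the theory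
`⟨D, W⟩`: a process is successful and closed iff `C` evaluates to true when each `o j` is the
consistency of the instantiated `j`-th test and each `c i` is the membership bit of `d i`. -/
def Represents (S : RegSem) (D : List Default) (W : List PForm) (u : ℕ) (δ : ℕ → PForm)
    (C : PForm) : Prop :=
  ∀ Pr, IsProcess D W Pr →
    ((S.Succ D W Pr ∧ S.Closed D W Pr) ↔
      circHolds C (fun j => bOf (ThConsistent {testAt δ (memOf D Pr) j})) (memOf D Pr))

/-- All variables of the original theory are below `N`. -/
def VarsBelow (D : List Default) (W : List PForm) (N : ℕ) : Prop :=
  (∀ d ∈ D, ∀ k ∈ d.prec.vars ∪ d.just.vars ∪ d.cons.vars, k < N) ∧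
    ∀ φ ∈ W, ∀ k ∈ φ.vars, k < N

/-- The variables of the tests and of the circuit are in range. -/
def TestVarsOK (m N u : ℕ) (δ : ℕ → PForm) (C : PForm) : Prop :=
  (∀ j < u, ∀ k ∈ (δ j).vars, (k % 2 = 0 → k / 2 < N) ∧ (k % 2 = 1 → k / 2 < m)) ∧
    ∀ k ∈ C.vars, (k % 2 = 0 → k / 2 < u) ∧ (k % 2 = 1 → k / 2 < m)

end Sim

end DLogic
namespace DLogic

/-! ### Complexity-theoretic notions -/

/-- `f : ℕ → ℕ` is computable in polynomial time (by a two-stack Turing machine, with the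
standard binary encoding of natural numbers). -/
def PolyTime (f : ℕ → ℕ) : Prop :=
  Nonempty
    (Turing.TM2ComputableInPolyTime Computability.encodingNatBool.encode
      Computability.encodingNatBool.encode f)

/-- The class P of polynomial-time decidable languages. -/
def InP (L : Set ℕ) : Prop := ∃ f, PolyTime f ∧ ∀ x, x ∈ L ↔ f x = 1

/-- The levels `Σₖᵖ` of the polynomial hierarchy. -/
def SigmaP : ℕ → Set ℕ → Prop
  | 0, L => InP L
  | (k + 1), L =>
      ∃ (p : Polynomial ℕ) (M : Set ℕ), SigmaP k Mᶜ ∧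
        ∀ x, x ∈ L ↔ ∃ y, Nat.size y ≤ p.eval (Nat.size x) ∧ Nat.pair x y ∈ M

/-- The levels `Πₖᵖ` of the polynomial hierarchy. -/
def PiP (k : ℕ) (L : Set ℕ) : Prop := SigmaP k Lᶜ

/-- The class `Dᵖ`: intersections of an NP language and a coNP language. -/
def InDP (L : Set ℕ) : Prop :=
  ∃ L₁ L₂ : Set ℕ, SigmaP 1 L₁ ∧ PiP 1 L₂ ∧ L = L₁ ∩ L₂

open Classical in
/-- Iterated computation with access to an oracle `A`: in each round the step function
receives the current state paired with the oracle's answer on the current state. -/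
noncomputable def oracleIter (step : ℕ → ℕ) (A : Set ℕ) : ℕ → ℕ → ℕ
  | 0, s => s
  | (k + 1), s => oracleIter step A k (step (Nat.pair s (if s ∈ A then 1 else 0)))

/-- The class `Δ₂ᵖ = Pᴺᴾ`: languages decidable by a polynomial-time machine making
polynomially many calls to an NP oracle. -/
def InDelta2 (L : Set ℕ) : Prop :=
  ∃ A : Set ℕ, SigmaP 1 A ∧ ∃ (p : Polynomial ℕ) (step : ℕ → ℕ), PolyTime step ∧
    (∀ x k, k ≤ p.eval (Nat.size x) →
      Nat.size (oracleIter step A k x) ≤ p.eval (Nat.size x)) ∧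
    ∀ x, x ∈ L ↔ (oracleIter step A (p.eval (Nat.size x)) x) % 2 = 1

/-- Functions computable in polynomial time with an NP oracle. -/
def DeltaTwoFun (f : ℕ → ℕ) : Prop :=
  ∃ A : Set ℕ, SigmaP 1 A ∧ ∃ (p : Polynomial ℕ) (step : ℕ → ℕ), PolyTime step ∧
    (∀ x k, k ≤ p.eval (Nat.size x) →
      Nat.size (oracleIter step A k x) ≤ p.eval (Nat.size x)) ∧
    ∀ x, f x = oracleIter step A (p.eval (Nat.size x)) x

/-- Polynomial-time many-one reducibility. -/
def PolyReducible (L M : Set ℕ) : Prop := ∃ f, PolyTime f ∧ ∀ x, x ∈ L ↔ f x ∈ M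

/-- Encoding of formulas as natural numbers. -/
def PForm.enc : PForm → ℕ
  | .var n => Nat.pair 0 n
  | .fls => Nat.pair 1 0
  | .imp a b => Nat.pair 2 (Nat.pair a.enc b.enc)

/-- Encoding of defaults as natural numbers. -/
def Default.enc (d : Default) : ℕ :=
  Nat.pair d.prec.enc (Nat.pair d.just.enc d.cons.enc)

/-- Encoding of lists as natural numbers. -/
def encList {α : Type} (f : α → ℕ) : List α → ℕ
  | [] => 0
  | x :: l => Nat.pair (f x) (encList f l) + 1

/-- Encoding of default theories. -/
def encTheory (D : List Default) (W : List PForm) : ℕ :=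
  Nat.pair (encList Default.enc D) (encList PForm.enc W)

/-- Encoding of a default theory together with a query variable. -/
def encInstance (D : List Default) (W : List PForm) (a : ℕ) : ℕ :=
  Nat.pair (encTheory D W) a

/-- Encoding of a default theory together with a sequence of defaults. -/
def encTriple (D : List Default) (W : List PForm) (Pr : List Default) : ℕ :=
  Nat.pair (encTheory D W) (encList Default.enc Pr)

/-- A binary function of polynomial size (in the size of its first argument plus its second
argument). -/
def PolysizeFun2 (g : ℕ → ℕ → ℕ) : Prop :=
  ∃ p : Polynomial ℕ, ∀ x n, Nat.size (g x n) ≤ p.eval (Nat.size x + n)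

/-- Non-uniform compilability class `nu-comp-C` for problems of pairs (fixed part, varying
part): the fixed part may be preprocessed, knowing the size of the varying part, into a
polynomial-size data structure after which the problem is in `C`. -/
def InNuComp (C : Set ℕ → Prop) (L : Set (ℕ × ℕ)) : Prop :=
  ∃ g : ℕ → ℕ → ℕ, PolysizeFun2 g ∧ ∃ M : Set ℕ, C M ∧
    ∀ x y, ((x, y) ∈ L ↔ Nat.pair (g x (Nat.size y)) y ∈ M)

/-- Non-uniform compilability (nu-comp) reductions. -/
def NuCompReducible (A B : Set (ℕ × ℕ)) : Prop :=
  ∃ f₁ f₂ : ℕ → ℕ → ℕ, ∃ g : ℕ → ℕ,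
    PolysizeFun2 f₁ ∧ PolysizeFun2 f₂ ∧ PolyTime g ∧
    ∀ x y, ((x, y) ∈ A ↔ (f₁ x (Nat.size y), g (Nat.pair (f₂ x (Nat.size y)) y)) ∈ B)

/-- The polynomial hierarchy collapses. -/
def PHCollapses : Prop := ∃ k, ∀ L : Set ℕ, SigmaP (k + 1) L → SigmaP k L

end DLogic
namespace DLogic

namespace PForm

lemma eval_agree : ∀ (φ : PForm) {v w : ℕ → Bool}, (∀ k ∈ φ.vars, v k = w k) →
    φ.eval v = φ.eval w
  | var n, v, w, h => h n (by simp [vars])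
  | fls, _, _, _ => rfl
  | imp a b, v, w, h => by
      simp only [eval]
      rw [eval_agree a (fun k hk => h k (by simp [vars]; exact Or.inl hk)),
          eval_agree b (fun k hk => h k (by simp [vars]; exact Or.inr hk))]

lemma eval_subst (f : ℕ → PForm) (v : ℕ → Bool) :
    ∀ φ : PForm, (φ.subst f).eval v = φ.eval (fun n => (f n).eval v)
  | var n => rfl
  | fls => rfl
  | imp a b => by simp only [subst, eval, eval_subst f v a, eval_subst f v b]

lemma eval_rename (σ : ℕ → ℕ) (v : ℕ → Bool) (φ : PForm) :
    (φ.rename σ).eval v = φ.eval (fun n => v (σ n)) := by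
  simp only [rename, eval_subst]; rfl

lemma mem_vars_subst {f : ℕ → PForm} {k : ℕ} :
    ∀ {φ : PForm}, k ∈ (φ.subst f).vars → ∃ n ∈ φ.vars, k ∈ (f n).vars
  | var n, h => ⟨n, by simp [vars], h⟩
  | fls, h => by simp [subst, vars] at h
  | imp a b, h => by
      simp only [subst, vars, Finset.mem_union] at h
      rcases h with h | h
      · obtain ⟨n, hn, hk⟩ := mem_vars_subst h
        exact ⟨n, by simp [vars]; exact Or.inl hn, hk⟩
      · obtain ⟨n, hn, hk⟩ := mem_vars_subst h
        exact ⟨n, by simp [vars]; exact Or.inr hn, hk⟩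

lemma eval_andF (φ ψ : PForm) (v : ℕ → Bool) :
    (φ.andF ψ).eval v = (φ.eval v && ψ.eval v) := by
  cases h1 : φ.eval v <;> cases h2 : ψ.eval v <;> simp [andF, neg, eval, h1, h2]

lemma mem_vars_andF {φ ψ : PForm} {k : ℕ} :
    k ∈ (φ.andF ψ).vars ↔ k ∈ φ.vars ∨ k ∈ ψ.vars := by
  simp [andF, neg, vars]

end PForm

lemma mem_vars_listConj {k : ℕ} :
    ∀ {l : List PForm}, k ∈ (listConj l).vars → ∃ φ ∈ l, k ∈ φ.vars
  | [], h => by simp [listConj, PForm.tru, PForm.vars] at h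
  | φ :: t, h => by
      rw [show listConj (φ :: t) = φ.andF (listConj t) from rfl,
        PForm.mem_vars_andF] at h
      rcases h with h | h
      · exact ⟨φ, by simp, h⟩
      · obtain ⟨ψ, hψ, hk⟩ := mem_vars_listConj h
        exact ⟨ψ, by simp [hψ], hk⟩

lemma filterMap_prefix {α β : Type*} (f : α → Option β) :
    ∀ (l : List α) (i : ℕ) (hi : i < (l.filterMap f).length),
      ∃ j, ∃ hj : j < l.length, f l[j] = some (l.filterMap f)[i] ∧
        (l.take j).filterMap f = (l.filterMap f).take i
  | [], i, hi => by simp at hi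
  | a :: t, i, hi => by
      cases hfa : f a with
      | none =>
          have he : (a :: t).filterMap f = t.filterMap f := List.filterMap_cons_none hfa
          rw [he] at hi
          obtain ⟨j, hj, h1, h2⟩ := filterMap_prefix f t i hi
          refine ⟨j + 1, by simpa using Nat.succ_lt_succ hj, ?_, ?_⟩
          · simpa [he] using h1
          · rw [List.take_succ_cons, List.filterMap_cons_none hfa, he]; exact h2
      | some b =>
          have he : (a :: t).filterMap f = b :: t.filterMap f := List.filterMap_cons_some hfa
          rw [he] at hi
          cases i with
          | zero =>
              refine ⟨0, by simp, ?_, ?_⟩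
              · simpa [he] using hfa
              · simp
          | succ i' =>
              obtain ⟨j, hj, h1, h2⟩ := filterMap_prefix f t i' (by simpa using hi)
              refine ⟨j + 1, by simpa using Nat.succ_lt_succ hj, ?_, ?_⟩
              · simpa [he] using h1
              · rw [List.take_succ_cons, List.filterMap_cons_some hfa, he,
                  List.take_succ_cons, h2]

namespace Sim

lemma cV_ge (N u m i : ℕ) : 2 * N ≤ cV N u m i := by
  have : N * 2 ≤ N * (u + 2) := Nat.mul_le_mul_left N (by omega)
  unfold cV; omega

lemma eV_ge (N u m i : ℕ) : 2 * N ≤ eV N u m i := by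
  have : N * 2 ≤ N * (u + 2) := Nat.mul_le_mul_left N (by omega)
  unfold eV; omega

lemma oV_ge (N u m i : ℕ) : 2 * N ≤ oV N u m i := by
  have : N * 2 ≤ N * (u + 2) := Nat.mul_le_mul_left N (by omega)
  unfold oV; omega

lemma tV_ge (N u m i : ℕ) : 2 * N ≤ tV N u m i := by
  have : N * 2 ≤ N * (u + 2) := Nat.mul_le_mul_left N (by omega)
  unfold tV; omega

lemma copyV_ge (N j k : ℕ) : 2 * N ≤ copyV N j k := by
  have : N * 1 ≤ N * (j + 1) := Nat.mul_le_mul_left N (by omega)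
  unfold copyV; omega

lemma origD_mem {D : List Default} {i : ℕ} (hi : i < D.length) : origD D i ∈ D := by
  rw [origD, List.getD_eq_getElem D dflt hi]
  exact List.getElem_mem hi

lemma mem_vars_instδ {N u m : ℕ} {δ : ℕ → PForm} {j k : ℕ}
    (hk : k ∈ (instδ N u m δ j).vars) : 2 * N ≤ k := by
  obtain ⟨n, _, hkn⟩ := PForm.mem_vars_subst hk
  split_ifs at hkn <;> simp [PForm.vars] at hkn <;> subst hkn
  · exact copyV_ge N j (n / 2)
  · exact cV_ge N u m (n / 2)

/-- Case analysis on a default of the simulating theory: either it is an `a`-default, or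
its consequence avoids the `X₀` band `[N, 2N)`. -/
lemma cons_cases {D : List Default} {W : List PForm} {N u : ℕ} {δ : ℕ → PForm} {C F : PForm}
    (hv : VarsBelow D W N) (hF : ∀ k ∈ F.vars, k < N) {d : Default}
    (hd : d ∈ simD D W N u δ C F) :
    (∃ i < D.length, d = aDef D N u i) ∨ (∀ k ∈ d.cons.vars, k < N ∨ 2 * N ≤ k) := by
  simp only [simD, List.mem_append, List.mem_map, List.mem_range, List.mem_cons,
    List.mem_singleton, List.not_mem_nil, or_false] at hd
  rcases hd with ((((⟨i, hi, rfl⟩ | ⟨i, hi, rfl⟩) | ⟨j, hj, rfl⟩) | ⟨j, hj, rfl⟩) | rfl | rfl)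
  · exact Or.inl ⟨i, hi, rfl⟩
  · refine Or.inr fun k hk => Or.inr ?_
    simp only [nDef, nFml, PForm.mem_vars_andF] at hk
    rcases hk with hk | hk
    · simp [PForm.neg, PForm.vars] at hk; subst hk; exact cV_ge N u D.length i
    · simp [PForm.vars] at hk; subst hk; exact eV_ge N u D.length i
  · refine Or.inr fun k hk => Or.inr ?_
    simp only [vDef, vFml, PForm.mem_vars_andF] at hk
    rcases hk with hk | hk | hk
    · exact mem_vars_instδ hk
    · simp [PForm.vars] at hk; subst hk; exact oV_ge N u D.length j
    · simp [PForm.vars] at hk; subst hk; exact tV_ge N u D.length j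
  · refine Or.inr fun k hk => Or.inr ?_
    simp only [gDef, gFml, PForm.mem_vars_andF] at hk
    rcases hk with hk | hk
    · simp [PForm.neg, PForm.vars] at hk; subst hk; exact oV_ge N u D.length j
    · simp [PForm.vars] at hk; subst hk; exact tV_ge N u D.length j
  · refine Or.inr fun k hk => ?_
    simp only [z1Def, z1Fml, PForm.mem_vars_andF] at hk
    rcases hk with hk | hk
    · obtain ⟨φ, hφ, hkφ⟩ := mem_vars_listConj hk
      exact Or.inl (hv.2 φ hφ k hkφ)
    · obtain ⟨φ, hφ, hkφ⟩ := mem_vars_listConj hk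
      simp only [List.mem_map, List.mem_range] at hφ
      obtain ⟨i, hi, rfl⟩ := hφ
      simp only [PForm.vars, Finset.mem_union, Finset.mem_singleton] at hkφ
      rcases hkφ with rfl | hkφ
      · exact Or.inr (cV_ge N u D.length i)
      · exact Or.inl (hv.1 _ (origD_mem hi) k
          (Finset.mem_union_right _ hkφ))
  · exact Or.inr fun k hk => Or.inl (hF k hk)

end Sim

open Sim in
/-- Extraction lemma for the `filterMap` function used in `Omap`. -/
lemma Omap_fn_some {D : List Default} {N u : ℕ} {d e : Default}
    (h : (((List.range D.length).find? fun i => decide (d = aDef D N u i)).map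
      (origD D)) = some e) :
    ∃ i < D.length, d = aDef D N u i ∧ e = origD D i := by
  rw [Option.map_eq_some_iff] at h
  obtain ⟨i, hfind, rfl⟩ := h
  refine ⟨i, List.mem_range.mp (List.mem_of_find?_eq_some hfind), ?_, rfl⟩
  have := List.find?_some hfind
  exact of_decide_eq_true this

open Sim in
/-- The midband substitution valuation models the simulated prefix theory. -/
lemma models_mid {D : List Default} {W : List PForm} {N u : ℕ} {δ : ℕ → PForm} {C F : PForm}
    (hv : VarsBelow D W N) (hF : ∀ k ∈ F.vars, k < N)
    {Pr T : List Default} {w : ℕ → Bool} (hw : Models w (procTh (simW W N) Pr))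
    (hPrD : ∀ d ∈ Pr, d ∈ simD D W N u δ C F) (hT : ∀ d ∈ T, d ∈ Pr)
    {v' : ℕ → Bool} (hv' : Models v' (procTh W (Omap D N u T))) :
    Models (fun k => if N ≤ k ∧ k < 2 * N then v' (k - N) else w k)
      (procTh (simW W N) T) := by
  set v : ℕ → Bool := fun k => if N ≤ k ∧ k < 2 * N then v' (k - N) else w k with hvdef
  have hband : ∀ k, (k < N ∨ 2 * N ≤ k) → v k = w k := by
    intro k hk; simp only [hvdef]; rw [if_neg (by omega)]
  have hlow : ∀ k, k < N → v (N + k) = v' k := by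
    intro k hk; simp only [hvdef]; rw [if_pos (by omega)]; congr 1; omega
  intro φ hφ
  simp only [procTh, Set.mem_setOf_eq] at hφ
  rcases hφ with hφ | ⟨d, hd, rfl⟩
  · -- φ ∈ simW
    simp only [simW, List.mem_map] at hφ
    obtain ⟨ψ, hψ, rfl⟩ := hφ
    rw [PForm.eval_rename]
    have : ψ.eval (fun n => v (ρ0 N n)) = ψ.eval v' := by
      apply PForm.eval_agree
      intro k hk
      exact hlow k (hv.2 ψ hψ k hk)
    rw [this]
    exact hv' ψ (Or.inl hψ)
  · -- consequence of d ∈ T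
    rcases cons_cases hv hF (hPrD d (hT d hd)) with ⟨i, hi, rfl⟩ | havoid
    · -- a-default
      set d := aDef D N u i with hddef
      have hsome : ((List.range D.length).find? fun i' => decide (d = aDef D N u i')).isSome :=
        List.find?_isSome.mpr ⟨i, List.mem_range.mpr hi, by simp [hddef]⟩
      obtain ⟨i₁, hfind⟩ := Option.isSome_iff_exists.mp hsome
      have hdi₁ : d = aDef D N u i₁ := by
        have h := List.find?_some hfind
        exact of_decide_eq_true h
      have hOm : origD D i₁ ∈ Omap D N u T :=
        List.mem_filterMap.mpr ⟨d, hd, by rw [hfind]; rfl⟩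
      have hwcons : d.cons.eval w = true := hw d.cons (Or.inr ⟨d, hT d hd, rfl⟩)
      rw [hdi₁] at hwcons ⊢
      show (aFml D N u i₁).eval v = true
      rw [aFml, PForm.eval_andF, Bool.and_eq_true]
      rw [show (aDef D N u i₁).cons = aFml D N u i₁ from rfl, aFml, PForm.eval_andF,
        Bool.and_eq_true] at hwcons
      constructor
      · rw [PForm.eval_rename]
        have : (origD D i₁).cons.eval (fun n => v (ρ0 N n)) = (origD D i₁).cons.eval v' := by
          apply PForm.eval_agree
          intro k hk
          exact hlow k (hv.1 _ (origD_mem (List.mem_range.mp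
            (List.mem_of_find?_eq_some hfind))) k (Finset.mem_union_right _ hk))
        rw [this]
        exact hv' _ (Or.inr ⟨origD D i₁, hOm, rfl⟩)
      · have : ((PForm.var (cV N u D.length i₁)).andF
            (PForm.var (eV N u D.length i₁))).eval v
            = ((PForm.var (cV N u D.length i₁)).andF
            (PForm.var (eV N u D.length i₁))).eval w := by
          apply PForm.eval_agree
          intro k hk
          apply hband
          rw [PForm.mem_vars_andF] at hk
          rcases hk with hk | hk <;> simp [PForm.vars] at hk <;> subst hk
          · exact Or.inr (cV_ge N u D.length i₁)
          · exact Or.inr (eV_ge N u D.length i₁)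
        rw [this]
        exact hwcons.2
    · -- avoiding consequence
      have : d.cons.eval v = d.cons.eval w :=
        PForm.eval_agree _ (fun k hk => hband k (havoid k hk))
      rw [this]
      exact hw d.cons (Or.inr ⟨d, hT d hd, rfl⟩)

end DLogic

namespace DLogic

open Sim in
/-- if `Π` is a process of the simulating normal theory `⟨D_u^F, W_u⟩`, then
`O(Π)` — the sequence of original defaults corresponding, in order, to the defaults `a i`
occurring in `Π` — is a process of the original theory `⟨D, W⟩`. -/
theorem sim_projection_is_process (D : List Default) (W : List PForm) (N u : ℕ)
    (δ : ℕ → PForm) (C F : PForm)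
    (hD : D.Nodup) (hv : VarsBelow D W N)
    (ht : TestVarsOK D.length N u δ C) (hF : ∀ k ∈ F.vars, k < N) :
    ∀ Pr : List Default, IsProcess (simD D W N u δ C F) (simW W N) Pr →
      IsProcess D W (Omap D N u Pr) := by
  intro Pr hPr
  obtain ⟨hnd, hmem, hcons, hprec⟩ := hPr
  obtain ⟨w, hw⟩ := hcons
  set f : Default → Option Default := fun d =>
    ((List.range D.length).find? fun i => decide (d = aDef D N u i)).map (origD D) with hfdef
  have hOmap : ∀ T, Omap D N u T = T.filterMap f := fun T => rfl
  have horig_inj : ∀ {i j : ℕ}, i < D.length → j < D.length →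
      origD D i = origD D j → i = j := by
    intro i j hi hj h
    rw [origD, origD, List.getD_eq_getElem D dflt hi, List.getD_eq_getElem D dflt hj] at h
    have h2 := (List.Nodup.get_inj_iff hD (i := ⟨i, hi⟩) (j := ⟨j, hj⟩)).mp h
    exact congrArg Fin.val h2
  refine ⟨?_, ?_, ?_, ?_⟩
  · -- Nodup
    rw [hOmap]
    refine List.Nodup.filterMap ?_ hnd
    intro a a' b hb hb'
    obtain ⟨i, hi, ha, hbi⟩ := Omap_fn_some (Option.mem_def.mp hb)
    obtain ⟨i', hi', ha', hbi'⟩ := Omap_fn_some (Option.mem_def.mp hb')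
    have : i = i' := horig_inj hi hi' (hbi ▸ hbi' ▸ rfl)
    rw [ha, ha', this]
  · -- membership in D
    intro d hd
    rw [hOmap] at hd
    obtain ⟨a, _, hfa⟩ := List.mem_filterMap.mp hd
    obtain ⟨i, hi, _, rfl⟩ := Omap_fn_some hfa
    exact origD_mem hi
  · -- consistency
    refine ⟨fun k => w (N + k), ?_⟩
    intro φ hφ
    simp only [procTh, Set.mem_setOf_eq] at hφ
    rcases hφ with hφ | ⟨e, he, rfl⟩
    · have : φ.rename (ρ0 N) ∈ procTh (simW W N) Pr :=
        Or.inl (List.mem_map.mpr ⟨φ, hφ, rfl⟩)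
      have := hw _ this
      rwa [PForm.eval_rename] at this
    · rw [hOmap] at he
      obtain ⟨d, hdPr, hfd⟩ := List.mem_filterMap.mp he
      obtain ⟨i, hi, rfl, rfl⟩ := Omap_fn_some hfd
      have hwcons : (aDef D N u i).cons.eval w = true :=
        hw _ (Or.inr ⟨aDef D N u i, hdPr, rfl⟩)
      rw [show (aDef D N u i).cons = aFml D N u i from rfl, aFml, PForm.eval_andF,
        Bool.and_eq_true] at hwcons
      have := hwcons.1
      rwa [PForm.eval_rename] at this
  · -- preconditions
    intro ℓ
    have hlen : (ℓ : ℕ) < (Pr.filterMap f).length := by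
      rw [← hOmap]; exact ℓ.2
    obtain ⟨j, hj, hfj, htake⟩ := filterMap_prefix f Pr ℓ.1 hlen
    obtain ⟨i, hi, hPrj, hget⟩ := Omap_fn_some hfj
    have hsim := hprec ⟨j, hj⟩
    have hgetj : Pr.get ⟨j, hj⟩ = aDef D N u i := by
      rw [List.get_eq_getElem]; exact hPrj
    rw [hgetj] at hsim
    have hgetℓ : (Omap D N u Pr).get ℓ = origD D i := hget
    rw [hgetℓ]
    have htake' : (Omap D N u Pr).take ℓ.1 = Omap D N u (Pr.take j) := htake.symm
    rw [htake']
    intro v' hv'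
    have hmid := models_mid (u := u) (δ := δ) (C := C) (F := F) hv hF hw hmem
      (List.take_subset j Pr) hv'
    have hev := hsim _ hmid
    rw [show (aDef D N u i).prec = (origD D i).prec.rename (ρ0 N) from rfl,
      PForm.eval_rename] at hev
    have : (origD D i).prec.eval (fun n =>
        (fun k => if N ≤ k ∧ k < 2 * N then v' (k - N) else w k) (ρ0 N n))
        = (origD D i).prec.eval v' := by
      apply PForm.eval_agree
      intro k hk
      have hkN : k < N := hv.1 _ (origD_mem hi) k
        (Finset.mem_union_left _ (Finset.mem_union_left _ hk))
      show (if N ≤ N + k ∧ N + k < 2 * N then v' (N + k - N) else w (N + k)) = v' k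
      rw [if_pos (by omega)]; congr 1; omega
    rw [this] at hev
    exact hev

end DLogic
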